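/- arXiv:1804.10924 — 3 statements merged into one kernel-verified Lean document; each statement's English description precedes it below -/
import Mathlib

section
/- Let K be a field and let V be a K-vector space equipped with a point v₀ ∈ V (a 'pointed vector space', i.e., an object of the coslice category of K-modules under K). If V is dualizable in the monoidal category of pointed K-vector spaces (with tensor product (V, v₀) ⊗ (W, w₀) = (V ⊗ W, v₀ ⊗ w₀) and unit (K, 1)), then V is one-dimensional and v₀ is nonzero; equivalently, (V, v₀) is isomorphic to the unit (K, 1). -/
open scoped TensorProduct

/-! Since `coev 1 = v₀ ⊗ d₀`, the snake identity for `V` reads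
`v = ev (d₀ ⊗ v) • v₀` for every `v`. Hence `v ↦ ev (d₀ ⊗ v)` and `c ↦ c • v₀` are inverse
linear maps between `V` and `K`: one composite is the identity by the snake identity, the other
because `ev (d₀ ⊗ v₀) = 1`. -/

section

variable {R : Type*} [CommRing R] {V : Type*} [AddCommGroup V] [Module R V]
  {D : Type*} [AddCommGroup D] [Module R D]

theorem smul_eq_of_snake {v₀ : V} {d₀ : D} {ev : D ⊗[R] V →ₗ[R] R} {coev : R →ₗ[R] V ⊗[R] D}
    (hcoev : coev 1 = v₀ ⊗ₜ[R] d₀)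
    (snake : (TensorProduct.rid R V).toLinearMap ∘ₗ
        TensorProduct.map (LinearMap.id : V →ₗ[R] V) ev ∘ₗ
        (TensorProduct.assoc R V D V).toLinearMap ∘ₗ
        TensorProduct.map coev (LinearMap.id : V →ₗ[R] V) ∘ₗ
        (TensorProduct.lid R V).symm.toLinearMap = LinearMap.id) (v : V) :
    ev (d₀ ⊗ₜ[R] v) • v₀ = v := by
  simpa [hcoev] using LinearMap.congr_fun snake v

theorem exists_linearEquiv_self_of_smul_eq {v₀ : V} (f : V →ₗ[R] R) (hf : f v₀ = 1)
    (h : ∀ v, f v • v₀ = v) : ∃ e : V ≃ₗ[R] R, e v₀ = 1 := by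
  refine ⟨LinearEquiv.ofLinearMap f (LinearMap.toSpanSingleton R V v₀) ?_ ?_, hf⟩
  · ext
    simp [hf]
  · ext v
    simpa using h v

end

theorem pointed_dualizable_is_unit_general (K : Type*) [Field K]
    (V : Type*) [AddCommGroup V] [Module K V] (v₀ : V)
    (D : Type*) [AddCommGroup D] [Module K D] (d₀ : D)
    (ev : D ⊗[K] V →ₗ[K] K) (coev : K →ₗ[K] V ⊗[K] D)
    (hev : ev (d₀ ⊗ₜ[K] v₀) = 1) (hcoev : coev 1 = v₀ ⊗ₜ[K] d₀)
    (snake₁ : (TensorProduct.rid K V).toLinearMap ∘ₗ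
        TensorProduct.map (LinearMap.id : V →ₗ[K] V) ev ∘ₗ
        (TensorProduct.assoc K V D V).toLinearMap ∘ₗ
        TensorProduct.map coev (LinearMap.id : V →ₗ[K] V) ∘ₗ
        (TensorProduct.lid K V).symm.toLinearMap = LinearMap.id) :
    ∃ e : V ≃ₗ[K] K, e v₀ = 1 :=
  exists_linearEquiv_self_of_smul_eq (ev ∘ₗ TensorProduct.mk K D V d₀) hev
    (smul_eq_of_snake hcoev snake₁)

/-- Let `K` be a field and `(V, v₀)` a pointed `K`-vector space. If `(V, v₀)` is dualizable
in the symmetric monoidal category of pointed `K`-vector spaces — i.e. there is a pointed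
vector space `(D, d₀)` with point-preserving evaluation `ev : D ⊗ V → K` and coevaluation
`coev : K → V ⊗ D` satisfying the snake identities — then `(V, v₀)` is isomorphic to the
unit `(K, 1)`: there is a `K`-linear equivalence `V ≃ K` sending `v₀` to `1` (so `V` is
one-dimensional and `v₀ ≠ 0`). -/
theorem pointed_dualizable_is_unit (K : Type*) [Field K]
    (V : Type*) [AddCommGroup V] [Module K V] (v₀ : V)
    (D : Type*) [AddCommGroup D] [Module K D] (d₀ : D)
    (ev : D ⊗[K] V →ₗ[K] K) (coev : K →ₗ[K] V ⊗[K] D)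
    (hev : ev (d₀ ⊗ₜ[K] v₀) = 1) (hcoev : coev 1 = v₀ ⊗ₜ[K] d₀)
    (snake₁ : (TensorProduct.rid K V).toLinearMap ∘ₗ
        TensorProduct.map (LinearMap.id : V →ₗ[K] V) ev ∘ₗ
        (TensorProduct.assoc K V D V).toLinearMap ∘ₗ
        TensorProduct.map coev (LinearMap.id : V →ₗ[K] V) ∘ₗ
        (TensorProduct.lid K V).symm.toLinearMap = LinearMap.id)
    (snake₂ : (TensorProduct.lid K D).toLinearMap ∘ₗ
        TensorProduct.map ev (LinearMap.id : D →ₗ[K] D) ∘ₗ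
        (TensorProduct.assoc K D V D).symm.toLinearMap ∘ₗ
        TensorProduct.map (LinearMap.id : D →ₗ[K] D) coev ∘ₗ
        (TensorProduct.rid K D).symm.toLinearMap = LinearMap.id) :
    ∃ e : V ≃ₗ[K] K, e v₀ = 1 :=
  pointed_dualizable_is_unit_general K V v₀ D d₀ ev coev hev hcoev snake₁
end

section
/- Let A, B be rings, M an (A,B)-bimodule with a distinguished element m₀ ∈ M, and N a (B,A)-bimodule with distinguished element n₀ ∈ N. Suppose there are bimodule maps c : M ⊗_B N → A with c(m₀ ⊗ n₀) = 1_A, and u : B → N ⊗_A M with u(1_B) = n₀ ⊗ m₀, satisfying the zigzag identities (the composite M → M ⊗_B N ⊗_A M → M induced by u and c equals id_M, and similarly for N). Then the map A → M, a ↦ a • m₀, is an isomorphism of left A-modules. -/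
open MulOpposite

universe u

theorem LinearMap.exists_linearEquiv_toSpanSingleton_of_inverse {A M : Type*} [Semiring A]
    [AddCommMonoid M] [Module A M] (m₀ : M) (g : M → A) (hleft : ∀ a : A, g (a • m₀) = a)
    (hright : ∀ m : M, g m • m₀ = m) :
    ∃ e : A ≃ₗ[A] M, ∀ a : A, e a = a • m₀ :=
  ⟨{ toSpanSingleton A M m₀ with
      invFun := g
      left_inv := hleft
      right_inv := hright }, fun _ => rfl⟩

theorem pointed_adjunction_unitMap_linearEquiv_general
    (A B M N : Type u) [Ring A] [Ring B]
    [AddCommGroup M] [Module A M]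
    (m₀ : M) (n₀ : N)
    -- `P` plays the role of `M ⊗_B N`, an `(A,A)`-bimodule:
    (P : Type u) [AddCommGroup P] [Module A P]
    (t : M → N → P)
    (htl : ∀ (a : A) m n, t (a • m) n = a • t m n)
    -- `Q` plays the role of `N ⊗_A M`, a `(B,B)`-bimodule:
    (Q : Type u) [AddCommGroup Q]
    -- the counit `c : M ⊗_B N → A`, an `(A,A)`-bimodule map preserving the pointings:
    (c : P →+ A)
    (hcl : ∀ (a : A) (p : P), c (a • p) = a * c p)
    (hcpt : c (t m₀ n₀) = 1)
    -- the unit `u : B → N ⊗_A M`, a `(B,B)`-bimodule map preserving the pointings: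
    (u : B →+ Q)
    -- the zigzag identities:
    (zig₁ : ∀ m : M, c (t m n₀) • m₀ = m) :
    ∃ e : A ≃ₗ[A] M, ∀ a : A, e a = a • m₀ := by
  refine LinearMap.exists_linearEquiv_toSpanSingleton_of_inverse m₀ (fun m => c (t m n₀))
    (fun a => ?_) zig₁
  rw [htl, hcl, hcpt, mul_one]

/-- Pointed-bimodule adjunction implies `a ↦ a • m₀` is an isomorphism of left `A`-modules.

`(M, m₀)` is a pointed `(A,B)`-bimodule and `(N, n₀)` a pointed `(B,A)`-bimodule (right
actions are encoded via `ᵐᵒᵖ`-module structures). The relative tensor products `M ⊗_B N`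
and `N ⊗_A M` are encoded as abelian groups `P`, `Q` equipped with balanced biadditive maps
`t`, `s` satisfying the universal property. The counit `c : M ⊗_B N → A` is an
`(A,A)`-bimodule map with `c (m₀ ⊗ n₀) = 1`, and the unit `u : B → N ⊗_A M` is a
`(B,B)`-bimodule map with `u 1 = n₀ ⊗ m₀`. Since `u` is determined by `u 1 = n₀ ⊗ m₀`,
the two zigzag identities read `∀ m, c (m ⊗ n₀) • m₀ = m` and `∀ n, n₀ • c (m₀ ⊗ n) = n`. -/
theorem pointed_adjunction_unitMap_linearEquiv
    (A B M N : Type u) [Ring A] [Ring B]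
    [AddCommGroup M] [Module A M] [Module Bᵐᵒᵖ M] [SMulCommClass A Bᵐᵒᵖ M]
    [AddCommGroup N] [Module B N] [Module Aᵐᵒᵖ N] [SMulCommClass B Aᵐᵒᵖ N]
    (m₀ : M) (n₀ : N)
    -- `P` plays the role of `M ⊗_B N`, an `(A,A)`-bimodule:
    (P : Type u) [AddCommGroup P] [Module A P] [Module Aᵐᵒᵖ P] [SMulCommClass A Aᵐᵒᵖ P]
    (t : M → N → P)
    (ht₁ : ∀ m m' n, t (m + m') n = t m n + t m' n)
    (ht₂ : ∀ m n n', t m (n + n') = t m n + t m n')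
    (htbal : ∀ (m : M) (b : B) (n : N), t (op b • m) n = t m (b • n))
    (htl : ∀ (a : A) m n, t (a • m) n = a • t m n)
    (htr : ∀ m n (a : A), t m (op a • n) = op a • t m n)
    (htuniv : ∀ (T : Type u) [AddCommGroup T] (β : M → N → T),
      (∀ m m' n, β (m + m') n = β m n + β m' n) →
      (∀ m n n', β m (n + n') = β m n + β m n') →
      (∀ (m : M) (b : B) (n : N), β (op b • m) n = β m (b • n)) →
      ∃! h : P →+ T, ∀ m n, h (t m n) = β m n)
    -- `Q` plays the role of `N ⊗_A M`, a `(B,B)`-bimodule: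
    (Q : Type u) [AddCommGroup Q] [Module B Q] [Module Bᵐᵒᵖ Q] [SMulCommClass B Bᵐᵒᵖ Q]
    (s : N → M → Q)
    (hs₁ : ∀ n n' m, s (n + n') m = s n m + s n' m)
    (hs₂ : ∀ n m m', s n (m + m') = s n m + s n m')
    (hsbal : ∀ (n : N) (a : A) (m : M), s (op a • n) m = s n (a • m))
    (hsl : ∀ (b : B) n m, s (b • n) m = b • s n m)
    (hsr : ∀ n m (b : B), s n (op b • m) = op b • s n m)
    (hsuniv : ∀ (T : Type u) [AddCommGroup T] (β : N → M → T),
      (∀ n n' m, β (n + n') m = β n m + β n' m) →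
      (∀ n m m', β n (m + m') = β n m + β n m') →
      (∀ (n : N) (a : A) (m : M), β (op a • n) m = β n (a • m)) →
      ∃! h : Q →+ T, ∀ n m, h (s n m) = β n m)
    -- the counit `c : M ⊗_B N → A`, an `(A,A)`-bimodule map preserving the pointings:
    (c : P →+ A)
    (hcl : ∀ (a : A) (p : P), c (a • p) = a * c p)
    (hcr : ∀ (p : P) (a : A), c (op a • p) = c p * a)
    (hcpt : c (t m₀ n₀) = 1)
    -- the unit `u : B → N ⊗_A M`, a `(B,B)`-bimodule map preserving the pointings:
    (u : B →+ Q)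
    (hul : ∀ b : B, u b = b • u 1)
    (hur : ∀ b : B, u b = op b • u 1)
    (hupt : u 1 = s n₀ m₀)
    -- the zigzag identities:
    (zig₁ : ∀ m : M, c (t m n₀) • m₀ = m)
    (zig₂ : ∀ n : N, op (c (t m₀ n)) • n₀ = n) :
    ∃ e : A ≃ₗ[A] M, ∀ a : A, e a = a • m₀ :=
  pointed_adjunction_unitMap_linearEquiv_general A B M N m₀ n₀ P t htl Q c hcl hcpt u zig₁
end

section
/- Let K be a commutative ring and A a unital associative K-algebra. In the Morita bicategory (objects: K-algebras; 1-morphisms from A to B: (A,B)-bimodules; composition: relative tensor product), consider the (A ⊗_K A^op, K)-bimodule A (evaluation) and the (K, A^op ⊗_K A)-bimodule A (coevaluation). Then there is an isomorphism of (K, K)-bimodules (K-modules) A ⊗_{A ⊗_K A^op} A ≅ A/[A,A], where [A,A] is the K-submodule generated by the commutators ab - ba. -/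
universe u

/-- The `K`-submodule `[A,A]` of `A` spanned by commutators `x*y - y*x`. -/
def commutatorSpan (K A : Type u) [CommRing K] [Ring A] [Algebra K A] : Submodule K A :=
  Submodule.span K {z : A | ∃ x y : A, z = x * y - y * x}

/-- `A ⊗_{A ⊗_K A^op} A ≅ A/[A,A]` as `K`-modules: the quotient `A ⧸ [A,A]`, together with
the map `(x, y) ↦ x*y mod [A,A]`, satisfies the universal property of the relative tensor
product of `A` with itself over the enveloping algebra `A ⊗_K A^op` (which acts on `A` by
`(a ⊗ b) • x = a*x*b` on the left and `x • (a ⊗ b) = b*x*a` on the right). That is, every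
`K`-bilinear map `β : A × A → T` that is balanced over the enveloping algebra, i.e.
`β (b*x*a) y = β x (a*y*b)`, factors uniquely through `A ⧸ [A,A]` via `(x,y) ↦ x*y`. -/
theorem tensor_over_enveloping_iso_quotient_commutators
    (K A : Type u) [CommRing K] [Ring A] [Algebra K A]
    (T : Type u) [AddCommGroup T] [Module K T] (β : A → A → T)
    (hadd₁ : ∀ x x' y, β (x + x') y = β x y + β x' y)
    (hadd₂ : ∀ x y y', β x (y + y') = β x y + β x y')
    (hsmul₁ : ∀ (k : K) x y, β (k • x) y = k • β x y)
    (hsmul₂ : ∀ (k : K) x y, β x (k • y) = k • β x y)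
    (hbal : ∀ a b x y : A, β (b * x * a) y = β x (a * y * b)) :
    ∃! h : (A ⧸ commutatorSpan K A) →ₗ[K] T,
      ∀ x y : A, h (Submodule.Quotient.mk (x * y)) = β x y := by
  -- key identities
  have key1 : ∀ b x : A, β (b * x) 1 = β x b := by
    intro b x
    have := hbal 1 b x 1
    simpa using this
  have key2 : ∀ a b : A, β (b * a) 1 = β (a * b) 1 := by
    intro a b
    have h1 := hbal a b 1 1
    have h2 := hbal b a 1 1
    simp only [mul_one, one_mul] at h1 h2
    rw [h1, ← key1 (a * b) 1, mul_one]
  -- the linear map z ↦ β z 1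
  let f : A →ₗ[K] T :=
    { toFun := fun z => β z 1
      map_add' := fun x y => hadd₁ x y 1
      map_smul' := fun k x => hsmul₁ k x 1 }
  have hker : commutatorSpan K A ≤ LinearMap.ker f := by
    rw [commutatorSpan, Submodule.span_le]
    rintro z ⟨x, y, rfl⟩
    simp only [SetLike.mem_coe, LinearMap.mem_ker, map_sub]
    have : f (x * y) = f (y * x) := (key2 x y).symm
    rw [this, sub_self]
  refine ⟨(commutatorSpan K A).liftQ f hker, ?_, ?_⟩
  · intro x y
    have : (commutatorSpan K A).liftQ f hker (Submodule.Quotient.mk (x * y)) = f (x * y) :=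
      rfl
    rw [this]
    show β (x * y) 1 = β x y
    rw [← key2 x y, key1]
  · intro h hh
    apply Submodule.linearMap_qext
    ext x
    have := hh x 1
    simpa [f] using this
end
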